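/- arXiv:1805.10262 — 2 statements merged into one kernel-verified Lean document; each statement's English description precedes it below -/
import Mathlib

section
/- Let J be a symmetric real n×n matrix with zero diagonal and J_{ij} ≥ 0 for all i,j, and consider the Ising model on {-1,1}^n with zero external field, i.e. Pr(X=x) = (1/Z)·exp((1/2)·Σ_{i,j} J_{ij} x_i x_j). Then for any (not necessarily distinct) indices 1 ≤ i,j,k,ℓ ≤ n, E[X_i X_j X_k X_ℓ] − E[X_i X_j]E[X_k X_ℓ] − E[X_i X_k]E[X_j X_ℓ] − E[X_i X_ℓ]E[X_j X_k] + 2·E[X_i X_ℓ]E[X_j X_ℓ]E[X_k X_ℓ] ≤ 0, where all expectations are with respect to this Boltzmann distribution (GHS inequality). -/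
open Finset
open scoped BigOperators Classical

noncomputable section

/-- The value of a spin: `true ↦ 1`, `false ↦ -1`. -/
def spin (b : Bool) : ℝ := if b then 1 else -1

/-- Boltzmann weight of a configuration of an Ising model with zero external field. -/
def ghsWeight (n : ℕ) (J : Fin n → Fin n → ℝ) (x : Fin n → Bool) : ℝ :=
  Real.exp ((1 / 2) * ∑ a, ∑ b, J a b * spin (x a) * spin (x b))

/-- Expectation with respect to the Boltzmann distribution with zero external field. -/
def ghsE (n : ℕ) (J : Fin n → Fin n → ℝ) (f : (Fin n → Bool) → ℝ) : ℝ :=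
  (∑ x : Fin n → Bool, f x * ghsWeight n J x) / (∑ x : Fin n → Bool, ghsWeight n J x)


/-! Auxiliary definitions -/

def ghsX : Fin 4 → (Bool × Bool × Bool × Bool) → ℝ
  | 0 => fun v => (spin v.1 + spin v.2.1 + spin v.2.2.1 + spin v.2.2.2)/2
  | 1 => fun v => (spin v.1 - spin v.2.1 + spin v.2.2.1 - spin v.2.2.2)/2
  | 2 => fun v => (spin v.1 + spin v.2.1 - spin v.2.2.1 - spin v.2.2.2)/2
  | 3 => fun v => (spin v.1 - spin v.2.1 - spin v.2.2.1 + spin v.2.2.2)/2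

def ghsIns (n : ℕ) (i j k l : Fin n) (s : Fin n) (v : Bool × Bool × Bool × Bool) : ℝ :=
  (spin v.1 - spin v.2.1) ^ ((if s = i then 1 else 0) + (if s = j then 1 else 0)) *
  (spin v.1 + spin v.2.1 - spin v.2.2.1 - spin v.2.2.2) ^ (if s = k then 1 else 0) *
  ((1 + spin v.1) * (1 + spin v.2.1) * (1 + spin v.2.2.1) * (1 + spin v.2.2.2)) ^
    (if s = l then 1 else 0)

def ghsK (n : ℕ) (J : Fin n → Fin n → ℝ) (y : Fin n → Bool × Bool × Bool × Bool) : ℝ :=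
  ∑ q : (Fin n × Fin n) × Fin 4, J q.1.1 q.1.2 / 2 * (ghsX q.2 (y q.1.1) * ghsX q.2 (y q.1.2))

def ghsS (n : ℕ) (J : Fin n → Fin n → ℝ) (i j k l : Fin n) : ℝ :=
  ∑ y : Fin n → Bool × Bool × Bool × Bool,
    (∏ s, ghsIns n i j k l s (y s)) * Real.exp (ghsK n J y)

def gU (n : ℕ) (J : Fin n → Fin n → ℝ) (l : Fin n) (x : Fin n → Bool) : ℝ :=
  (1 + spin (x l)) * ghsWeight n J x

/-! basic facts -/

lemma spin_not (b : Bool) : spin (!b) = - spin b := by cases b <;> simp [spin]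

lemma ghsWeight_pos (n : ℕ) (J : Fin n → Fin n → ℝ) (x : Fin n → Bool) :
    0 < ghsWeight n J x := Real.exp_pos _

lemma ghsWeight_flip (n : ℕ) (J : Fin n → Fin n → ℝ) (x : Fin n → Bool) :
    ghsWeight n J (fun a => !(x a)) = ghsWeight n J x := by
  unfold ghsWeight
  congr 2
  refine Finset.sum_congr rfl fun a _ => Finset.sum_congr rfl fun b _ => ?_
  rw [spin_not, spin_not]; ring

lemma sum_odd_vanish (n : ℕ) (J : Fin n → Fin n → ℝ) (f : (Fin n → Bool) → ℝ)
    (hf : ∀ x, f (fun a => !(x a)) = - f x) :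
    ∑ x : Fin n → Bool, f x * ghsWeight n J x = 0 := by
  have hinv : Function.Involutive (fun (x : Fin n → Bool) => fun a => !(x a)) := by
    intro x; funext a; simp
  have h : ∑ x : Fin n → Bool, f x * ghsWeight n J x
      = ∑ x : Fin n → Bool, -(f x * ghsWeight n J x) := by
    refine Fintype.sum_bijective _ hinv.bijective _ _ fun x => ?_
    rw [hf, ghsWeight_flip]; ring
  rw [Finset.sum_neg_distrib] at h
  linarith

/-! the sixteen-product expansion of a quadruple sum -/

lemma sum4 {α : Type*} [Fintype α] (f1 f2 f3 f4 : α → ℝ) :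
    (∑ x1 : α, ∑ x2 : α, ∑ x3 : α, ∑ x4 : α, f1 x1 * (f2 x2 * (f3 x3 * f4 x4)))
      = (∑ x, f1 x) * ((∑ x, f2 x) * ((∑ x, f3 x) * (∑ x, f4 x))) := by
  simp only [← Finset.mul_sum, ← Finset.sum_mul]

/-! U-sums -/

def US (n : ℕ) (J : Fin n → Fin n → ℝ) (l : Fin n) (f : (Fin n → Bool) → ℝ) : ℝ :=
  ∑ x : Fin n → Bool, f x * gU n J l x

lemma US_split (n : ℕ) (J : Fin n → Fin n → ℝ) (l : Fin n) (f : (Fin n → Bool) → ℝ) :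
    US n J l f = (∑ x : Fin n → Bool, f x * ghsWeight n J x)
      + ∑ x : Fin n → Bool, (f x * spin (x l)) * ghsWeight n J x := by
  unfold US gU
  rw [← Finset.sum_add_distrib]
  refine Finset.sum_congr rfl fun x _ => by ring

/-! packing equivalence -/

def pack (n : ℕ) :
    ((Fin n → Bool) × (Fin n → Bool) × (Fin n → Bool) × (Fin n → Bool))
      ≃ (Fin n → Bool × Bool × Bool × Bool) where
  toFun p := fun s => (p.1 s, p.2.1 s, p.2.2.1 s, p.2.2.2 s)
  invFun y := (fun s => (y s).1, fun s => (y s).2.1, fun s => (y s).2.2.1, fun s => (y s).2.2.2)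
  left_inv p := rfl
  right_inv y := rfl

lemma prod_ghsIns (n : ℕ) (i j k l : Fin n) (v : Fin n → Bool × Bool × Bool × Bool) :
    ∏ s, ghsIns n i j k l s (v s) =
      (spin (v i).1 - spin (v i).2.1) * ((spin (v j).1 - spin (v j).2.1) *
      ((spin (v k).1 + spin (v k).2.1 - spin (v k).2.2.1 - spin (v k).2.2.2) *
      ((1 + spin (v l).1) * (1 + spin (v l).2.1) * (1 + spin (v l).2.2.1)
        * (1 + spin (v l).2.2.2)))) := by
  unfold ghsIns
  simp only [pow_add, pow_ite, pow_one, pow_zero]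
  rw [Finset.prod_mul_distrib, Finset.prod_mul_distrib, Finset.prod_mul_distrib]
  simp [Finset.prod_ite_eq', mul_assoc]

lemma exp_ghsK (n : ℕ) (J : Fin n → Fin n → ℝ) (v : Fin n → Bool × Bool × Bool × Bool) :
    Real.exp (ghsK n J v) = ghsWeight n J (fun s => (v s).1) *
      ghsWeight n J (fun s => (v s).2.1) * ghsWeight n J (fun s => (v s).2.2.1) *
      ghsWeight n J (fun s => (v s).2.2.2) := by
  unfold ghsWeight
  rw [← Real.exp_add, ← Real.exp_add, ← Real.exp_add]
  congr 1
  unfold ghsK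
  rw [Fintype.sum_prod_type, Fintype.sum_prod_type]
  simp only [Finset.mul_sum, ← Finset.sum_add_distrib]
  refine Finset.sum_congr rfl fun a _ => Finset.sum_congr rfl fun b _ => ?_
  rw [Fin.sum_univ_four]
  simp only [ghsX]
  ring

def gE2 (n : ℕ) (J : Fin n → Fin n → ℝ) (a b : Fin n) : ℝ :=
  ∑ x : Fin n → Bool, spin (x a) * spin (x b) * ghsWeight n J x

def gE4 (n : ℕ) (J : Fin n → Fin n → ℝ) (i j k l : Fin n) : ℝ :=
  ∑ x : Fin n → Bool, spin (x i) * spin (x j) * spin (x k) * spin (x l) * ghsWeight n J x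

def gZ (n : ℕ) (J : Fin n → Fin n → ℝ) : ℝ := ∑ x : Fin n → Bool, ghsWeight n J x

lemma sumU0 (n : ℕ) (J : Fin n → Fin n → ℝ) (l : Fin n) :
    ∑ x : Fin n → Bool, gU n J l x = gZ n J := by
  unfold gU gZ
  have h0 : ∑ x : Fin n → Bool, spin (x l) * ghsWeight n J x = 0 :=
    sum_odd_vanish n J _ (fun x => by rw [spin_not])
  calc ∑ x : Fin n → Bool, (1 + spin (x l)) * ghsWeight n J x
      = ∑ x : Fin n → Bool, (ghsWeight n J x + spin (x l) * ghsWeight n J x) := by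
        refine Finset.sum_congr rfl fun x _ => by ring
    _ = _ := by rw [Finset.sum_add_distrib, h0, add_zero]

lemma sumU1 (n : ℕ) (J : Fin n → Fin n → ℝ) (l a : Fin n) :
    ∑ x : Fin n → Bool, spin (x a) * gU n J l x = gE2 n J a l := by
  unfold gU gE2
  have h0 : ∑ x : Fin n → Bool, spin (x a) * ghsWeight n J x = 0 :=
    sum_odd_vanish n J _ (fun x => by rw [spin_not])
  calc ∑ x : Fin n → Bool, spin (x a) * ((1 + spin (x l)) * ghsWeight n J x)
      = ∑ x : Fin n → Bool, (spin (x a) * ghsWeight n J x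
          + spin (x a) * spin (x l) * ghsWeight n J x) := by
        refine Finset.sum_congr rfl fun x _ => by ring
    _ = _ := by rw [Finset.sum_add_distrib, h0, zero_add]

lemma sumU2 (n : ℕ) (J : Fin n → Fin n → ℝ) (l a b : Fin n) :
    ∑ x : Fin n → Bool, spin (x a) * spin (x b) * gU n J l x = gE2 n J a b := by
  unfold gU gE2
  have h0 : ∑ x : Fin n → Bool, (spin (x a) * spin (x b) * spin (x l)) * ghsWeight n J x = 0 :=
    sum_odd_vanish n J _ (fun x => by rw [spin_not, spin_not, spin_not]; ring)
  calc ∑ x : Fin n → Bool, spin (x a) * spin (x b) * ((1 + spin (x l)) * ghsWeight n J x)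
      = ∑ x : Fin n → Bool, (spin (x a) * spin (x b) * ghsWeight n J x
          + (spin (x a) * spin (x b) * spin (x l)) * ghsWeight n J x) := by
        refine Finset.sum_congr rfl fun x _ => by ring
    _ = _ := by rw [Finset.sum_add_distrib, h0, add_zero]

lemma sumU3 (n : ℕ) (J : Fin n → Fin n → ℝ) (l a b c : Fin n) :
    ∑ x : Fin n → Bool, spin (x a) * spin (x b) * spin (x c) * gU n J l x
      = ∑ x : Fin n → Bool, spin (x a) * spin (x b) * spin (x c) * spin (x l)
          * ghsWeight n J x := by
  unfold gU
  have h0 : ∑ x : Fin n → Bool, (spin (x a) * spin (x b) * spin (x c)) * ghsWeight n J x = 0 :=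
    sum_odd_vanish n J _ (fun x => by rw [spin_not, spin_not, spin_not]; ring)
  calc ∑ x : Fin n → Bool, spin (x a) * spin (x b) * spin (x c) * ((1 + spin (x l)) * ghsWeight n J x)
      = ∑ x : Fin n → Bool, ((spin (x a) * spin (x b) * spin (x c)) * ghsWeight n J x
          + spin (x a) * spin (x b) * spin (x c) * spin (x l) * ghsWeight n J x) := by
        refine Finset.sum_congr rfl fun x _ => by ring
    _ = _ := by rw [Finset.sum_add_distrib, h0, zero_add]

lemma ghsS_val (n : ℕ) (J : Fin n → Fin n → ℝ) (i j k l : Fin n) :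
    ghsS n J i j k l
      = 2 * (gZ n J ^ 3 * gE4 n J i j k l
          - gZ n J ^ 2 * (gE2 n J i k * gE2 n J j l)
          - gZ n J ^ 2 * (gE2 n J j k * gE2 n J i l)
          - gZ n J ^ 2 * (gE2 n J i j * gE2 n J k l)
          + 2 * gZ n J * (gE2 n J i l * (gE2 n J j l * gE2 n J k l))) := by
  unfold ghsS
  rw [← Equiv.sum_comp (pack n)
    (fun y => (∏ s, ghsIns n i j k l s (y s)) * Real.exp (ghsK n J y))]
  rw [Fintype.sum_prod_type, ]
  simp only [Fintype.sum_prod_type]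
  -- now a quadruple nested sum over x1 x2 x3 x4
  have step : ∀ x1 x2 x3 x4 : Fin n → Bool,
      (∏ s, ghsIns n i j k l s (pack n (x1, x2, x3, x4) s))
          * Real.exp (ghsK n J (pack n (x1, x2, x3, x4)))
      = (fun x => spin (x i) * spin (x j) * spin (x k) * gU n J l x) x1 *
          ((fun x => gU n J l x) x2 * ((fun x => gU n J l x) x3 * (fun x => gU n J l x) x4))
      + (fun x => spin (x i) * spin (x j) * gU n J l x) x1 *
          ((fun x => spin (x k) * gU n J l x) x2 *
            ((fun x => gU n J l x) x3 * (fun x => gU n J l x) x4))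
      - (fun x => spin (x i) * spin (x j) * gU n J l x) x1 *
          ((fun x => gU n J l x) x2 *
            ((fun x => spin (x k) * gU n J l x) x3 * (fun x => gU n J l x) x4))
      - (fun x => spin (x i) * spin (x j) * gU n J l x) x1 *
          ((fun x => gU n J l x) x2 *
            ((fun x => gU n J l x) x3 * (fun x => spin (x k) * gU n J l x) x4))
      - (fun x => spin (x i) * spin (x k) * gU n J l x) x1 *
          ((fun x => spin (x j) * gU n J l x) x2 *
            ((fun x => gU n J l x) x3 * (fun x => gU n J l x) x4))
      - (fun x => spin (x i) * gU n J l x) x1 *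
          ((fun x => spin (x j) * spin (x k) * gU n J l x) x2 *
            ((fun x => gU n J l x) x3 * (fun x => gU n J l x) x4))
      + (fun x => spin (x i) * gU n J l x) x1 *
          ((fun x => spin (x j) * gU n J l x) x2 *
            ((fun x => spin (x k) * gU n J l x) x3 * (fun x => gU n J l x) x4))
      + (fun x => spin (x i) * gU n J l x) x1 *
          ((fun x => spin (x j) * gU n J l x) x2 *
            ((fun x => gU n J l x) x3 * (fun x => spin (x k) * gU n J l x) x4))
      - (fun x => spin (x j) * spin (x k) * gU n J l x) x1 *
          ((fun x => spin (x i) * gU n J l x) x2 *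
            ((fun x => gU n J l x) x3 * (fun x => gU n J l x) x4))
      - (fun x => spin (x j) * gU n J l x) x1 *
          ((fun x => spin (x i) * spin (x k) * gU n J l x) x2 *
            ((fun x => gU n J l x) x3 * (fun x => gU n J l x) x4))
      + (fun x => spin (x j) * gU n J l x) x1 *
          ((fun x => spin (x i) * gU n J l x) x2 *
            ((fun x => spin (x k) * gU n J l x) x3 * (fun x => gU n J l x) x4))
      + (fun x => spin (x j) * gU n J l x) x1 *
          ((fun x => spin (x i) * gU n J l x) x2 *
            ((fun x => gU n J l x) x3 * (fun x => spin (x k) * gU n J l x) x4))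
      + (fun x => spin (x k) * gU n J l x) x1 *
          ((fun x => spin (x i) * spin (x j) * gU n J l x) x2 *
            ((fun x => gU n J l x) x3 * (fun x => gU n J l x) x4))
      + (fun x => gU n J l x) x1 *
          ((fun x => spin (x i) * spin (x j) * spin (x k) * gU n J l x) x2 *
            ((fun x => gU n J l x) x3 * (fun x => gU n J l x) x4))
      - (fun x => gU n J l x) x1 *
          ((fun x => spin (x i) * spin (x j) * gU n J l x) x2 *
            ((fun x => spin (x k) * gU n J l x) x3 * (fun x => gU n J l x) x4))
      - (fun x => gU n J l x) x1 *
          ((fun x => spin (x i) * spin (x j) * gU n J l x) x2 *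
            ((fun x => gU n J l x) x3 * (fun x => spin (x k) * gU n J l x) x4)) := by
    intro x1 x2 x3 x4
    rw [prod_ghsIns, exp_ghsK]
    show _ = _
    simp only []
    unfold gU pack
    simp only [Equiv.coe_fn_mk]
    ring
  simp only [step]
  simp only [Finset.sum_add_distrib, Finset.sum_sub_distrib]
  simp only [sum4]
  simp only [sumU0, sumU1, sumU2, sumU3]
  unfold gE4
  ring

/-! ## Part B : ghsS ≤ 0 -/

set_option maxHeartbeats 0 in
lemma loc (p q r a b c d : ℕ) (hp : p ≤ 2) (hq : q ≤ 1) (hr : r ≤ 1) :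
    0 ≤ (-1:ℝ)^(c+q) * ∑ v : Bool × Bool × Bool × Bool,
      ((spin v.1 - spin v.2.1) ^ p *
        (spin v.1 + spin v.2.1 - spin v.2.2.1 - spin v.2.2.2) ^ q *
        ((1+spin v.1)*(1+spin v.2.1)*(1+spin v.2.2.1)*(1+spin v.2.2.2)) ^ r *
        (((spin v.1 + spin v.2.1 + spin v.2.2.1 + spin v.2.2.2)/2) ^ a *
         ((spin v.1 - spin v.2.1 + spin v.2.2.1 - spin v.2.2.2)/2) ^ b *
         ((spin v.1 + spin v.2.1 - spin v.2.2.1 - spin v.2.2.2)/2) ^ c *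
         ((spin v.1 - spin v.2.1 - spin v.2.2.1 + spin v.2.2.2)/2) ^ d)) := by
  norm_num [Fintype.sum_prod_type, Fintype.sum_bool, spin]
  interval_cases p <;> interval_cases q <;> interval_cases r <;>
    obtain ha | ha := Nat.even_or_odd a <;> obtain hb | hb := Nat.even_or_odd b <;>
    obtain hc | hc := Nat.even_or_odd c <;> obtain hd | hd := Nat.even_or_odd d <;>
  ( try simp only [zero_pow ha.pos.ne']
    try simp only [zero_pow hb.pos.ne']
    try simp only [zero_pow hc.pos.ne']
    try simp only [zero_pow hd.pos.ne']
    simp only [pow_add, pow_zero, pow_one, one_mul, mul_one, one_pow,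
      ha.neg_pow, hb.neg_pow, hc.neg_pow, hd.neg_pow]
    ring_nf
    positivity )

/-- rewriting the local monomials via `ghsX` -/
lemma loc' (p q r a b c d : ℕ) (hp : p ≤ 2) (hq : q ≤ 1) (hr : r ≤ 1) :
    0 ≤ (-1:ℝ)^(c+q) * ∑ v : Bool × Bool × Bool × Bool,
      ((spin v.1 - spin v.2.1) ^ p *
        (spin v.1 + spin v.2.1 - spin v.2.2.1 - spin v.2.2.2) ^ q *
        ((1+spin v.1)*(1+spin v.2.1)*(1+spin v.2.2.1)*(1+spin v.2.2.2)) ^ r *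
        (ghsX 0 v ^ a * ghsX 1 v ^ b * ghsX 2 v ^ c * ghsX 3 v ^ d)) := by
  have := loc p q r a b c d hp hq hr
  simpa only [ghsX] using this

/-- extraction of a single letter value as a double product -/
lemma pick (n : ℕ) (y : Fin n → Bool × Bool × Bool × Bool) (a : Fin n) (L0 : Fin 4) :
    ghsX L0 (y a)
      = ∏ s, ∏ L, ghsX L (y s) ^ (if a = s ∧ L0 = L then 1 else 0) := by
  have h1 : ∀ s, (∏ L, ghsX L (y s) ^ (if a = s ∧ L0 = L then 1 else 0))
      = if a = s then ghsX L0 (y s) else 1 := by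
    intro s
    by_cases h : a = s <;> simp [h, pow_ite, Finset.prod_ite_eq]
  rw [Finset.prod_congr rfl (fun s _ => h1 s), Finset.prod_ite_eq]
  simp

lemma core (n : ℕ) (i j k l : Fin n) (m : ℕ) (φ : Fin m → (Fin n × Fin n) × Fin 4) :
    ∑ y : Fin n → Bool × Bool × Bool × Bool,
      (∏ s, ghsIns n i j k l s (y s)) *
        ∏ t, (ghsX (φ t).2 (y (φ t).1.1) * ghsX (φ t).2 (y (φ t).1.2)) ≤ 0 := by
  classical
  -- exponent counts
  set eL : Fin n → Fin 4 → ℕ := fun s L => ∑ t,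
      ((if (φ t).1.1 = s ∧ (φ t).2 = L then 1 else 0)
        + (if (φ t).1.2 = s ∧ (φ t).2 = L then 1 else 0)) with heL
  -- rewrite the coupling product as site-local monomials
  have hB : ∀ y : Fin n → Bool × Bool × Bool × Bool,
      (∏ t, (ghsX (φ t).2 (y (φ t).1.1) * ghsX (φ t).2 (y (φ t).1.2)))
        = ∏ s, ∏ L, ghsX L (y s) ^ (eL s L) := by
    intro y
    have hA : ∀ t, ghsX (φ t).2 (y (φ t).1.1) * ghsX (φ t).2 (y (φ t).1.2)
        = ∏ s, ∏ L, ghsX L (y s) ^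
            ((if (φ t).1.1 = s ∧ (φ t).2 = L then 1 else 0)
              + (if (φ t).1.2 = s ∧ (φ t).2 = L then 1 else 0)) := by
      intro t
      simp only [pow_add]
      rw [show (∏ s, ∏ L, ghsX L (y s) ^ (if (φ t).1.1 = s ∧ (φ t).2 = L then 1 else 0)
            * ghsX L (y s) ^ (if (φ t).1.2 = s ∧ (φ t).2 = L then 1 else 0))
          = (∏ s, ∏ L, ghsX L (y s) ^ (if (φ t).1.1 = s ∧ (φ t).2 = L then 1 else 0))
            * (∏ s, ∏ L, ghsX L (y s) ^ (if (φ t).1.2 = s ∧ (φ t).2 = L then 1 else 0)) from by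
          rw [← Finset.prod_mul_distrib]
          exact Finset.prod_congr rfl fun s _ => by rw [← Finset.prod_mul_distrib]]
      rw [← pick n y (φ t).1.1 (φ t).2, ← pick n y (φ t).1.2 (φ t).2]
    rw [Finset.prod_congr rfl (fun t _ => hA t), Finset.prod_comm]
    refine Finset.prod_congr rfl fun s _ => ?_
    rw [Finset.prod_comm]
    exact Finset.prod_congr rfl fun L _ => by rw [Finset.prod_pow_eq_pow_sum, heL]
  -- factorize the sum over sites
  have hfac : ∑ y : Fin n → Bool × Bool × Bool × Bool,
      (∏ s, ghsIns n i j k l s (y s)) *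
        ∏ t, (ghsX (φ t).2 (y (φ t).1.1) * ghsX (φ t).2 (y (φ t).1.2))
      = ∏ s, ∑ v : Bool × Bool × Bool × Bool,
          (ghsIns n i j k l s v * ∏ L, ghsX L v ^ (eL s L)) := by
    rw [Finset.prod_univ_sum]
    rw [← Fintype.piFinset_univ]
    refine Finset.sum_congr rfl fun y _ => ?_
    rw [hB y, ← Finset.prod_mul_distrib]
  rw [hfac]
  -- sign bookkeeping
  set es : Fin n → ℕ := fun s => eL s 2 + (if s = k then 1 else 0) with hes
  have hM : ∀ s, 0 ≤ (-1:ℝ)^(es s) * ∑ v : Bool × Bool × Bool × Bool,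
      (ghsIns n i j k l s v * ∏ L, ghsX L v ^ (eL s L)) := by
    intro s
    have h4 : ∀ v : Bool × Bool × Bool × Bool,
        (∏ L, ghsX L v ^ (eL s L))
          = ghsX 0 v ^ (eL s 0) * ghsX 1 v ^ (eL s 1) * ghsX 2 v ^ (eL s 2)
            * ghsX 3 v ^ (eL s 3) := fun v => by
      rw [Fin.prod_univ_four]
    have := loc' ((if s = i then 1 else 0) + (if s = j then 1 else 0))
        (if s = k then 1 else 0) (if s = l then 1 else 0)
        (eL s 0) (eL s 1) (eL s 2) (eL s 3)
        (by split_ifs <;> norm_num) (by split_ifs <;> norm_num) (by split_ifs <;> norm_num)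
    simp only [hes, ghsIns, h4]
    exact this
  have hodd : Odd (∑ s, es s) := by
    have h2 : ∑ s, es s = (∑ s, eL s 2) + 1 := by
      rw [hes]
      simp only [Finset.sum_add_distrib]
      congr 1
      rw [Finset.sum_ite_eq' Finset.univ k (fun _ => 1)]
      simp
    have heven : Even (∑ s, eL s 2) := by
      have hcalc : ∑ s, eL s 2 = ∑ t, ((if (φ t).2 = 2 then 1 else 0)
          + (if (φ t).2 = 2 then 1 else 0)) := by
        rw [heL]
        rw [Finset.sum_comm]
        refine Finset.sum_congr rfl fun t _ => ?_
        have : ∀ (a0 : Fin n), ∑ s, (if a0 = s ∧ (φ t).2 = 2 then 1 else 0)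
            = (if (φ t).2 = 2 then 1 else 0) := by
          intro a0
          simp only [ite_and]
          rw [Finset.sum_ite_eq Finset.univ a0 (fun _ => if (φ t).2 = 2 then 1 else 0)]
          simp
        rw [Finset.sum_add_distrib, this, this]
      exact ⟨∑ t, (if (φ t).2 = 2 then 1 else 0), by rw [hcalc, ← Finset.sum_add_distrib]⟩
    rw [h2]
    exact heven.add_one
  -- conclude
  have key : ∏ s, (∑ v : Bool × Bool × Bool × Bool,
      (ghsIns n i j k l s v * ∏ L, ghsX L v ^ (eL s L)))
      = (-1:ℝ)^(∑ s, es s) * ∏ s, ((-1:ℝ)^(es s) * ∑ v : Bool × Bool × Bool × Bool,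
          (ghsIns n i j k l s v * ∏ L, ghsX L v ^ (eL s L))) := by
    rw [Finset.prod_mul_distrib, ← Finset.prod_pow_eq_pow_sum, ← mul_assoc,
      ← Finset.prod_mul_distrib]
    rw [show (∏ s : Fin n, ((-1:ℝ)^(es s) * (-1:ℝ)^(es s))) = ∏ s : Fin n, (1:ℝ) from
      Finset.prod_congr rfl fun s _ => by rw [← pow_add]; exact Even.neg_one_pow ⟨es s, rfl⟩]
    simp
  rw [key, hodd.neg_one_pow]
  have : 0 ≤ ∏ s, ((-1:ℝ)^(es s) * ∑ v : Bool × Bool × Bool × Bool,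
      (ghsIns n i j k l s v * ∏ L, ghsX L v ^ (eL s L))) :=
    Finset.prod_nonneg fun s _ => hM s
  linarith

lemma Tm_nonpos (n : ℕ) (J : Fin n → Fin n → ℝ) (hferro : ∀ a b, 0 ≤ J a b)
    (i j k l : Fin n) (m : ℕ) :
    ∑ y : Fin n → Bool × Bool × Bool × Bool,
      (∏ s, ghsIns n i j k l s (y s)) * ghsK n J y ^ m ≤ 0 := by
  classical
  have hK : ∀ y : Fin n → Bool × Bool × Bool × Bool, ghsK n J y ^ m
      = ∑ φ ∈ Fintype.piFinset (fun _ : Fin m => (Finset.univ : Finset ((Fin n × Fin n) × Fin 4))),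
          ∏ t, (J (φ t).1.1 (φ t).1.2 / 2
            * (ghsX (φ t).2 (y (φ t).1.1) * ghsX (φ t).2 (y (φ t).1.2))) := by
    intro y
    have h1 : ghsK n J y ^ m = ∏ _t : Fin m, ghsK n J y := by
      rw [Finset.prod_const, Finset.card_univ, Fintype.card_fin]
    rw [h1]
    unfold ghsK
    rw [Finset.prod_univ_sum]
  calc ∑ y : Fin n → Bool × Bool × Bool × Bool,
        (∏ s, ghsIns n i j k l s (y s)) * ghsK n J y ^ m
      = ∑ φ ∈ Fintype.piFinset (fun _ : Fin m => (Finset.univ : Finset ((Fin n × Fin n) × Fin 4))),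
          ∑ y : Fin n → Bool × Bool × Bool × Bool,
            (∏ t, (J (φ t).1.1 (φ t).1.2 / 2)) *
              ((∏ s, ghsIns n i j k l s (y s)) *
                ∏ t, (ghsX (φ t).2 (y (φ t).1.1) * ghsX (φ t).2 (y (φ t).1.2))) := by
        rw [Finset.sum_comm]
        refine Finset.sum_congr rfl fun y _ => ?_
        rw [hK y, Finset.mul_sum]
        refine Finset.sum_congr rfl fun φ _ => ?_
        rw [Finset.prod_mul_distrib]
        ring
    _ ≤ 0 := by
        refine Finset.sum_nonpos fun φ _ => ?_
        rw [← Finset.mul_sum]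
        have h1 : 0 ≤ ∏ t, (J (φ t).1.1 (φ t).1.2 / 2) :=
          Finset.prod_nonneg fun t _ => div_nonneg (hferro _ _) (by norm_num)
        have h2 := core n i j k l m φ
        exact mul_nonpos_of_nonneg_of_nonpos h1 h2

lemma ghsS_nonpos (n : ℕ) (J : Fin n → Fin n → ℝ) (hferro : ∀ a b, 0 ≤ J a b)
    (i j k l : Fin n) : ghsS n J i j k l ≤ 0 := by
  classical
  unfold ghsS
  have hexp : ∀ y : Fin n → Bool × Bool × Bool × Bool,
      Real.exp (ghsK n J y) = ∑' mm : ℕ, ghsK n J y ^ mm / (Nat.factorial mm : ℝ) := by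
    intro y
    rw [Real.exp_eq_exp_ℝ, NormedSpace.exp_eq_tsum_div]
  have hsummable : ∀ y : Fin n → Bool × Bool × Bool × Bool,
      Summable (fun mm : ℕ => (∏ s, ghsIns n i j k l s (y s)) * (ghsK n J y ^ mm / (Nat.factorial mm : ℝ))) :=
    fun y => (Real.summable_pow_div_factorial (ghsK n J y)).mul_left _
  calc ∑ y : Fin n → Bool × Bool × Bool × Bool,
        (∏ s, ghsIns n i j k l s (y s)) * Real.exp (ghsK n J y)
      = ∑ y : Fin n → Bool × Bool × Bool × Bool,
          ∑' mm : ℕ, (∏ s, ghsIns n i j k l s (y s)) * (ghsK n J y ^ mm / (Nat.factorial mm : ℝ)) := by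
        refine Finset.sum_congr rfl fun y _ => ?_
        rw [hexp y, tsum_mul_left]
    _ = ∑' mm : ℕ, ∑ y : Fin n → Bool × Bool × Bool × Bool,
          (∏ s, ghsIns n i j k l s (y s)) * (ghsK n J y ^ mm / (Nat.factorial mm : ℝ)) :=
        (Summable.tsum_finsetSum (fun y _ => hsummable y)).symm
    _ ≤ 0 := by
        refine tsum_nonpos fun mm => ?_
        have h1 : ∑ y : Fin n → Bool × Bool × Bool × Bool,
            (∏ s, ghsIns n i j k l s (y s)) * (ghsK n J y ^ mm / (Nat.factorial mm : ℝ))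
            = (∑ y : Fin n → Bool × Bool × Bool × Bool,
                (∏ s, ghsIns n i j k l s (y s)) * ghsK n J y ^ mm) / (Nat.factorial mm : ℝ) := by
          rw [Finset.sum_div]
          exact Finset.sum_congr rfl fun y _ => by ring
        rw [h1]
        exact div_nonpos_of_nonpos_of_nonneg (Tm_nonpos n J hferro i j k l mm)
          (by positivity)

/-- The GHS inequality for ferromagnetic Ising models with zero external field. -/
theorem ghs_inequality (n : ℕ) (J : Fin n → Fin n → ℝ)
    (hsymm : ∀ a b, J a b = J b a) (hdiag : ∀ a, J a a = 0)
    (hferro : ∀ a b, 0 ≤ J a b) (i j k l : Fin n) :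
    ghsE n J (fun x => spin (x i) * spin (x j) * spin (x k) * spin (x l))
      - ghsE n J (fun x => spin (x i) * spin (x j)) * ghsE n J (fun x => spin (x k) * spin (x l))
      - ghsE n J (fun x => spin (x i) * spin (x k)) * ghsE n J (fun x => spin (x j) * spin (x l))
      - ghsE n J (fun x => spin (x i) * spin (x l)) * ghsE n J (fun x => spin (x j) * spin (x k))
      + 2 * ghsE n J (fun x => spin (x i) * spin (x l))
          * ghsE n J (fun x => spin (x j) * spin (x l))
          * ghsE n J (fun x => spin (x k) * spin (x l)) ≤ 0 := by
  classical
  have hZ : 0 < gZ n J :=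
    Finset.sum_pos (fun x _ => ghsWeight_pos n J x) ⟨fun _ => true, Finset.mem_univ _⟩
  have e2 : ∀ a b : Fin n, ghsE n J (fun x => spin (x a) * spin (x b))
      = gE2 n J a b / gZ n J := fun a b => rfl
  have e4 : ghsE n J (fun x => spin (x i) * spin (x j) * spin (x k) * spin (x l))
      = gE4 n J i j k l / gZ n J := rfl
  rw [e4, e2, e2, e2, e2, e2, e2]
  have key : gE4 n J i j k l / gZ n J
      - gE2 n J i j / gZ n J * (gE2 n J k l / gZ n J)
      - gE2 n J i k / gZ n J * (gE2 n J j l / gZ n J)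
      - gE2 n J i l / gZ n J * (gE2 n J j k / gZ n J)
      + 2 * (gE2 n J i l / gZ n J) * (gE2 n J j l / gZ n J) * (gE2 n J k l / gZ n J)
      = ghsS n J i j k l / (2 * gZ n J ^ 4) := by
    rw [ghsS_val n J i j k l]
    field_simp
    ring
  rw [key]
  exact div_nonpos_of_nonpos_of_nonneg (ghsS_nonpos n J hferro i j k l) (by positivity)
end
end

section
/- Let r, d be positive integers and M > 0. Consider an arbitrary order-r Markov Random Field on {-1,1}^n, i.e. Pr(X=x) = (1/Z)·exp(f(x)) with f a multilinear polynomial of degree at most r and f(0) = 0, whose structure graph has degree at most d and all of whose coefficients are bounded in absolute value by M. Then there exists a constant C = C(d, M, r) and a Restricted Boltzmann Machine with n observed nodes and m ≤ C·n hidden nodes, with parameters (J, h^{(1)}, h^{(2)}), such that: (1) the marginal law of the observed variables of the RBM equals the distribution of the original MRF; (2) every hidden node has at most r neighbors (i.e. every column of J has at most r nonzero entries); and (3) the two-hop neighborhood of every observed node (the set of observed nodes sharing a hidden neighbor with it) equals its MRF neighborhood, so in particular the two-hop degree equals the degree of the structure graph of the MRF. -/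
/-!
Summing out a hidden unit with weights `w` and bias `b` multiplies the observed marginal by
`2 cosh (⟨w, x⟩ + b)`, so it suffices to write each monomial `c_S ∏_{i ∈ S} x_i`, up to an
additive constant, as a sum of terms `log (2 cosh (⟨w, x⟩ + b))` with `w` supported on `S`.
Take one unit for each `A ⊆ S` with `(-1)^|A| = s`, with weight `-t` on `A`, `t` on `S \ A`
and a common bias `b`. Flipping the spins of `X ⊆ S` turns the unit of `A` into that of `A ∆ X`, so
the sum equals `(T + s (-1)^|X| D) / 2` with `T` constant and
`D = ∑_j (-1)^j (k choose j) log (2 cosh (t (k - 2j) + b))`, `k = |S|`.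
For `b = β t` and `t → ∞`, `D ≈ t ∑_j (-1)^j (k choose j) |k - 2j + β|`, which is affine in
`β ∈ (0, 1)` with nonzero slope; by continuity `D` takes the value `±2 c_S`.
A variable lies in at most `2^(d+1)` monomials and a monomial needs at most `2^r` units.
-/

open Finset
open scoped BigOperators Classical

noncomputable section

/-- Boltzmann weight of a joint configuration of a Restricted Boltzmann Machine. -/
def rbmWeight (n m : ℕ) (J : Fin n → Fin m → ℝ) (h1 : Fin n → ℝ) (h2 : Fin m → ℝ)
    (x : Fin n → Bool) (y : Fin m → Bool) : ℝ :=
  Real.exp ((∑ i, ∑ j, J i j * spin (x i) * spin (y j))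
    + (∑ i, h1 i * spin (x i)) + (∑ j, h2 j * spin (y j)))

/-- Partition function of a Restricted Boltzmann Machine. -/
def rbmZ (n m : ℕ) (J : Fin n → Fin m → ℝ) (h1 : Fin n → ℝ) (h2 : Fin m → ℝ) : ℝ :=
  ∑ x : Fin n → Bool, ∑ y : Fin m → Bool, rbmWeight n m J h1 h2 x y

/-- The MRF potential with coefficient function `c`. -/
def mrfPotential (n : ℕ) (c : Finset (Fin n) → ℝ) (x : Fin n → Bool) : ℝ :=
  ∑ S : Finset (Fin n), c S * ∏ s ∈ S, spin (x s)

/-- The MRF neighborhood of vertex `i`: vertices `j ≠ i` appearing together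
with `i` in a monomial of the potential with nonzero coefficient. -/
def mrfNbhd (n : ℕ) (c : Finset (Fin n) → ℝ) (i : Fin n) : Finset (Fin n) :=
  univ.filter (fun j => j ≠ i ∧ ∃ S : Finset (Fin n), c S ≠ 0 ∧ i ∈ S ∧ j ∈ S)

/-- The two-hop neighborhood of observed node `i` in an RBM: observed nodes `j ≠ i`
sharing a hidden neighbor with `i`. -/
def twoHopNbhd (n m : ℕ) (J : Fin n → Fin m → ℝ) (i : Fin n) : Finset (Fin n) :=
  univ.filter (fun j => j ≠ i ∧ ∃ kh : Fin m, J i kh ≠ 0 ∧ J j kh ≠ 0)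

open scoped symmDiff

def logTwoCosh (z : ℝ) : ℝ := Real.log (2 * Real.cosh z)

lemma sum_bool_exp_mul_spin (z : ℝ) :
    ∑ b : Bool, Real.exp (z * spin b) = Real.exp (logTwoCosh z) := by
  rw [logTwoCosh, Real.exp_log (by positivity), Real.cosh_eq, Fintype.sum_bool]
  simp only [spin, if_true, Bool.false_eq_true, if_false, mul_one, mul_neg_one]
  ring

lemma logTwoCosh_sub_abs_mem_Icc (z : ℝ) : logTwoCosh z - |z| ∈ Set.Icc 0 (Real.log 2) := by
  have hcosh : 2 * Real.cosh z = Real.exp |z| + Real.exp (-|z|) := by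
    rw [← Real.cosh_abs, Real.cosh_eq]; ring
  have hlow : Real.exp |z| ≤ 2 * Real.cosh z := by
    rw [hcosh]; linarith [Real.exp_pos (-|z|)]
  have hup : 2 * Real.cosh z ≤ 2 * Real.exp |z| := by
    rw [hcosh]; linarith [Real.exp_le_exp.2 (neg_le_self (abs_nonneg z))]
  constructor
  · rw [sub_nonneg, logTwoCosh, ← Real.log_exp |z|]
    exact Real.log_le_log (Real.exp_pos _) hlow
  · rw [sub_le_iff_le_add, logTwoCosh, ← Real.log_exp |z|, ← Real.log_mul two_ne_zero
      (Real.exp_ne_zero _)]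
    exact Real.log_le_log (by positivity) (by linarith)

@[fun_prop]
lemma continuous_logTwoCosh : Continuous logTwoCosh :=
  (continuous_const.mul Real.continuous_cosh).log fun z => (mul_pos two_pos (Real.cosh_pos z)).ne'

def altBinomSum (k : ℕ) (f : ℕ → ℝ) : ℝ :=
  ∑ j ∈ range (k + 1), (-1) ^ j * k.choose j * f j

lemma altBinomSum_sub (k : ℕ) (f g : ℕ → ℝ) :
    altBinomSum k (fun j => f j - g j) = altBinomSum k f - altBinomSum k g := by
  simp only [altBinomSum, mul_sub, sum_sub_distrib]

lemma altBinomSum_const_mul (k : ℕ) (a : ℝ) (f : ℕ → ℝ) :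
    altBinomSum k (fun j => a * f j) = a * altBinomSum k f := by
  simp only [altBinomSum, mul_sum]
  exact sum_congr rfl fun j _ => by ring

lemma altBinomSum_const {k : ℕ} (hk : k ≠ 0) (a : ℝ) : altBinomSum k (fun _ => a) = 0 := by
  have h := congrArg (fun z : ℤ => (z : ℝ)) (Int.alternating_sum_range_choose_of_ne hk)
  push_cast at h
  rw [altBinomSum, ← sum_mul, h, zero_mul]

lemma abs_altBinomSum_le {k : ℕ} {f : ℕ → ℝ} {ε : ℝ} (hf : ∀ j, |f j| ≤ ε) :
    |altBinomSum k f| ≤ 2 ^ k * ε := by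
  calc |altBinomSum k f| ≤ ∑ j ∈ range (k + 1), |(-1) ^ j * k.choose j * f j| :=
        abs_sum_le_sum_abs _ _
    _ ≤ ∑ j ∈ range (k + 1), (k.choose j : ℝ) * ε := by
        gcongr with j
        rw [abs_mul, abs_mul, abs_pow, abs_neg, abs_one, one_pow, one_mul, Nat.abs_cast]
        exact mul_le_mul_of_nonneg_left (hf j) (Nat.cast_nonneg _)
    _ = 2 ^ k * ε := by
        rw [← sum_mul]; exact_mod_cast congrArg (fun N : ℕ => (N : ℝ) * ε) (Nat.sum_range_choose k)

lemma altBinomSum_sign_ne_zero {k : ℕ} (hk : k ≠ 0) :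
    altBinomSum k (fun j => if 2 * j ≤ k then 1 else -1) ≠ 0 := by
  obtain ⟨l, rfl⟩ := Nat.exists_eq_add_one_of_ne_zero hk
  have hhalf : ∑ j ∈ range (l + 1 + 1) with 2 * j ≤ l + 1, (-1 : ℝ) ^ j * (l + 1).choose j
      = (-1) ^ ((l + 1) / 2) * l.choose ((l + 1) / 2) := by
    have h := congrArg (fun z : ℤ => (z : ℝ))
      (Int.alternating_sum_range_choose_eq_choose (n := l) (m := (l + 1) / 2))
    push_cast at h
    rw [← h]
    congr 1
    ext j
    simp only [mem_filter, mem_range]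
    omega
  have hsplit : altBinomSum (l + 1) (fun j => if 2 * j ≤ l + 1 then 1 else -1)
      = 2 * ∑ j ∈ range (l + 1 + 1) with 2 * j ≤ l + 1, (-1 : ℝ) ^ j * (l + 1).choose j
        - altBinomSum (l + 1) (fun _ => 1) := by
    rw [sum_filter, mul_sum, altBinomSum, altBinomSum, ← sum_sub_distrib]
    refine sum_congr rfl fun j _ => ?_
    split_ifs <;> ring
  rw [hsplit, altBinomSum_const hk, hhalf, sub_zero]
  have hl : (l + 1) / 2 ≤ l := by omega
  have := (Nat.choose_pos hl).ne'
  positivity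

lemma exists_altBinomSum_abs_ne_zero {k : ℕ} (hk : k ≠ 0) :
    ∃ β : ℝ, altBinomSum k (fun j => |(k : ℝ) - 2 * j + β|) ≠ 0 := by
  by_contra! h
  apply altBinomSum_sign_ne_zero hk
  -- on `0 < β < 1` the sum is affine in `β`, with slope the alternating sum of signs
  have hslope : (fun j : ℕ => if 2 * j ≤ k then (1 : ℝ) else -1)
      = fun j : ℕ => 6 * (|(k : ℝ) - 2 * j + 1 / 2| - |(k : ℝ) - 2 * j + 1 / 3|) := by
    funext j
    split_ifs with hj
    · have : (2 * j : ℝ) ≤ k := by exact_mod_cast hj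
      rw [abs_of_pos (by linarith), abs_of_pos (by linarith)]; ring
    · have : (k : ℝ) + 1 ≤ 2 * j := by exact_mod_cast (by omega : k + 1 ≤ 2 * j)
      rw [abs_of_neg (by linarith), abs_of_neg (by linarith)]; ring
  rw [hslope, altBinomSum_const_mul, altBinomSum_sub, h, h, sub_zero, mul_zero]

lemma exists_pos_abs_eq_of_abs_sub_mul_le {g : ℝ → ℝ} (hg : Continuous g) {Q W y : ℝ}
    (hQ : Q ≠ 0) (hW : ∀ t, 0 ≤ t → |g t - t * Q| ≤ W) (hy : |g 0| < y) :
    ∃ t > 0, |g t| = y := by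
  have hW0 : 0 ≤ W := (abs_nonneg _).trans (hW 0 le_rfl)
  set T := (y + W) / |Q|
  have hT : 0 ≤ T := div_nonneg (by linarith [abs_nonneg (g 0)]) (abs_nonneg Q)
  have hgT : y ≤ |g T| := by
    have hTQ : |T * Q| = y + W := by
      rw [abs_mul, abs_of_nonneg hT, div_mul_cancel₀ _ (abs_ne_zero.2 hQ)]
    have := abs_sub_abs_le_abs_sub (T * Q) (g T)
    rw [abs_sub_comm] at this
    linarith [hW T hT]
  obtain ⟨t, ht, hgt⟩ := intermediate_value_Icc hT hg.abs.continuousOn ⟨hy.le, hgT⟩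
  refine ⟨t, ht.1.lt_of_ne ?_, hgt⟩
  rintro rfl
  exact hy.ne hgt

lemma exists_abs_altBinomSum_logTwoCosh_eq {k : ℕ} (hk : k ≠ 0) {y : ℝ} (hy : 0 < y) :
    ∃ t > 0, ∃ b : ℝ, |altBinomSum k (fun j => logTwoCosh (t * (k - 2 * j) + b))| = y := by
  obtain ⟨β, hβ⟩ := exists_altBinomSum_abs_ne_zero hk
  set g := fun t : ℝ => altBinomSum k (fun j => logTwoCosh (t * (k - 2 * j) + β * t))
  have hg : Continuous g := by
    unfold g altBinomSum
    fun_prop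
  have hW : ∀ t, 0 ≤ t → |g t - t * altBinomSum k (fun j => |(k : ℝ) - 2 * j + β|)|
      ≤ 2 ^ k * Real.log 2 := by
    intro t ht
    have habs : ∀ j : ℕ, |t * ((k : ℝ) - 2 * j) + β * t| = t * |(k : ℝ) - 2 * j + β| := by
      intro j
      rw [← abs_of_nonneg ht, ← abs_mul, abs_of_nonneg ht]
      ring_nf
    rw [← altBinomSum_const_mul, ← altBinomSum_sub]
    refine abs_altBinomSum_le fun j => ?_
    rw [← habs, abs_of_nonneg (logTwoCosh_sub_abs_mem_Icc _).1]
    exact (logTwoCosh_sub_abs_mem_Icc _).2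
  obtain ⟨t, ht, hgt⟩ := exists_pos_abs_eq_of_abs_sub_mul_le hg hβ hW
    (by simpa [g, altBinomSum_const hk] using hy)
  exact ⟨t, ht, β * t, hgt⟩

section Subsets

variable {α : Type*}

lemma neg_one_pow_card_symmDiff [DecidableEq α] (A X : Finset α) :
    (-1 : ℝ) ^ #(A ∆ X) = (-1) ^ #A * (-1) ^ #X := by
  have hunion : #(A ∆ X) + #(A ∩ X) = #(A ∪ X) :=
    (card_union_of_disjoint (disjoint_symmDiff_inf A X)).symm.trans
      (congrArg card (symmDiff_sup_inf A X))
  have hcard : #(A ∆ X) + 2 * #(A ∩ X) = #A + #X := by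
    have := card_union_add_card_inter A X
    omega
  have h := congrArg (fun N => (-1 : ℝ) ^ N) hcard
  simp only [pow_add, pow_mul, neg_one_sq, one_pow, mul_one] at h
  exact h

lemma sum_powerset_symmDiff [DecidableEq α] {β : Type*} [AddCommMonoid β] {S X : Finset α}
    (hX : X ⊆ S) (G : Finset α → β) : ∑ A ∈ S.powerset, G (A ∆ X) = ∑ A ∈ S.powerset, G A := by
  have hmem : ∀ A ∈ S.powerset, A ∆ X ∈ S.powerset := fun A hA =>
    mem_powerset.2 (symmDiff_le_sup.trans (union_subset (mem_powerset.1 hA) hX))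
  exact sum_nbij' (· ∆ X) (· ∆ X) hmem hmem (fun A _ => symmDiff_symmDiff_cancel_right X A)
    (fun A _ => symmDiff_symmDiff_cancel_right X A) fun _ _ => rfl

lemma sum_filter_neg_one_pow_card_eq {s : ℝ} (hs : s = 1 ∨ s = -1) (P : Finset (Finset α))
    (G : Finset α → ℝ) :
    ∑ A ∈ P with (-1) ^ #A = s, G A
      = (∑ A ∈ P, G A + s * ∑ A ∈ P, (-1) ^ #A * G A) / 2 := by
  rw [sum_filter, mul_sum, ← sum_add_distrib, sum_div]
  refine sum_congr rfl fun A _ => ?_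
  rcases neg_one_pow_eq_or ℝ #A with h | h <;> rcases hs with rfl | rfl <;> norm_num [h]

lemma sum_powerset_neg_one_pow_card_mul (S : Finset α) (F : ℕ → ℝ) :
    ∑ B ∈ S.powerset, (-1) ^ #B * F #B = altBinomSum #S F := by
  rw [sum_powerset_apply_card (fun j => (-1) ^ j * F j), altBinomSum]
  exact sum_congr rfl fun j _ => by rw [nsmul_eq_mul]; ring

lemma prod_spin_eq_neg_one_pow [DecidableEq α] (S : Finset α) (x : α → Bool) :
    ∏ i ∈ S, spin (x i) = (-1) ^ #{i ∈ S | x i = false} := by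
  have hspin : ∀ i, spin (x i) = if x i = false then -1 else 1 := fun i => by
    cases x i <;> rfl
  simp only [hspin, prod_ite, prod_const, one_pow, mul_one]

lemma sum_ite_neg_mul_spin [DecidableEq α] {S A : Finset α} (hA : A ⊆ S) (x : α → Bool) :
    ∑ i ∈ S, (if i ∈ A then -1 else 1) * spin (x i)
      = #S - 2 * #(A ∆ {i ∈ S | x i = false}) := by
  have hsub : A ∆ {i ∈ S | x i = false} ⊆ S :=
    symmDiff_le_sup.trans (union_subset hA (filter_subset _ _))
  have hterm : ∀ i ∈ S, (if i ∈ A then -1 else 1) * spin (x i)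
      = 1 - 2 * (if i ∈ A ∆ {i ∈ S | x i = false} then 1 else 0) := by
    intro i hi
    by_cases hiA : i ∈ A <;> cases hxi : x i <;>
      simp [mem_symmDiff, spin, hiA, hxi, hi] <;> norm_num
  rw [sum_congr rfl hterm, sum_sub_distrib, ← mul_sum, sum_boole, filter_mem_eq_inter,
    inter_eq_right.2 hsub]
  simp

end Subsets

lemma exists_gadget {α : Type*} [DecidableEq α] {S : Finset α} (hS : S.Nonempty) {γ : ℝ}
    (hγ : γ ≠ 0) :
    ∃ t b s K : ℝ, t ≠ 0 ∧ (s = 1 ∨ s = -1) ∧ ∀ x : α → Bool,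
      ∑ A ∈ S.powerset with (-1) ^ #A = s,
          logTwoCosh (t * ∑ i ∈ S, (if i ∈ A then -1 else 1) * spin (x i) + b)
        = K + γ * ∏ i ∈ S, spin (x i) := by
  obtain ⟨t, ht, b, hD⟩ := exists_abs_altBinomSum_logTwoCosh_eq (card_ne_zero.2 hS)
    (abs_pos.2 (mul_ne_zero two_ne_zero hγ))
  set F : ℕ → ℝ := fun j => logTwoCosh (t * (#S - 2 * j) + b)
  obtain ⟨s, hs, hsD⟩ : ∃ s : ℝ, (s = 1 ∨ s = -1) ∧ s * altBinomSum #S F = 2 * γ := by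
    rcases abs_eq_abs.1 hD with h | h
    · exact ⟨1, Or.inl rfl, by rw [h, one_mul]⟩
    · exact ⟨-1, Or.inr rfl, by rw [h]; ring⟩
  refine ⟨t, b, s, (∑ B ∈ S.powerset, F #B) / 2, ht.ne', hs, fun x => ?_⟩
  set X := {i ∈ S | x i = false}
  have hX : X ⊆ S := filter_subset _ _
  -- flipping the spins of `X` maps the unit of `A` to that of `A ∆ X`
  have hflip : ∀ A ∈ S.powerset, (-1) ^ #A * F #(A ∆ X)
      = (-1) ^ #X * ((-1) ^ #(A ∆ X) * F #(A ∆ X)) := fun A _ => by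
    have hsq : (-1 : ℝ) ^ #X * (-1) ^ #X = 1 := by rw [← mul_pow]; norm_num
    rw [neg_one_pow_card_symmDiff]
    linear_combination (-((-1 : ℝ) ^ #A * F #(A ∆ X))) * hsq
  calc ∑ A ∈ S.powerset with (-1) ^ #A = s,
          logTwoCosh (t * ∑ i ∈ S, (if i ∈ A then -1 else 1) * spin (x i) + b)
      = ∑ A ∈ S.powerset with (-1) ^ #A = s, F #(A ∆ X) :=
        sum_congr rfl fun A hA => by
          rw [sum_ite_neg_mul_spin (mem_powerset.1 (mem_filter.1 hA).1)]
    _ = (∑ A ∈ S.powerset, F #(A ∆ X) + s * ∑ A ∈ S.powerset, (-1) ^ #A * F #(A ∆ X)) / 2 :=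
        sum_filter_neg_one_pow_card_eq hs _ _
    _ = (∑ B ∈ S.powerset, F #B + s * ((-1) ^ #X * altBinomSum #S F)) / 2 := by
        rw [sum_congr rfl hflip, ← mul_sum, sum_powerset_symmDiff hX (fun B => F #B),
          sum_powerset_symmDiff hX (fun B => (-1) ^ #B * F #B),
          sum_powerset_neg_one_pow_card_mul]
    _ = (∑ B ∈ S.powerset, F #B) / 2 + γ * ∏ i ∈ S, spin (x i) := by
        rw [prod_spin_eq_neg_one_pow]
        linear_combination ((-1 : ℝ) ^ #X / 2) * hsD

section RBM

variable {n m : ℕ}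

lemma sum_rbmWeight_eq_exp (J : Fin n → Fin m → ℝ) (h1 : Fin n → ℝ) (h2 : Fin m → ℝ)
    (x : Fin n → Bool) :
    ∑ y, rbmWeight n m J h1 h2 x y = Real.exp (∑ i, h1 i * spin (x i)
      + ∑ j, logTwoCosh (∑ i, J i j * spin (x i) + h2 j)) := by
  have hweight : ∀ y, rbmWeight n m J h1 h2 x y = Real.exp (∑ i, h1 i * spin (x i))
      * ∏ j, Real.exp ((∑ i, J i j * spin (x i) + h2 j) * spin (y j)) := by
    intro y
    rw [rbmWeight, ← Real.exp_sum, ← Real.exp_add]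
    congr 1
    simp only [add_mul, sum_add_distrib, sum_mul]
    rw [sum_comm]
    ring
  rw [sum_congr rfl fun y _ => hweight y, ← mul_sum,
    ← Fintype.prod_sum fun j b => Real.exp ((∑ i, J i j * spin (x i) + h2 j) * spin b)]
  simp_rw [sum_bool_exp_mul_spin, ← Real.exp_sum, ← Real.exp_add]

lemma rbm_marginal_eq {J : Fin n → Fin m → ℝ} {h1 : Fin n → ℝ} {h2 : Fin m → ℝ}
    {f : (Fin n → Bool) → ℝ} {K : ℝ}
    (hf : ∀ x, ∑ i, h1 i * spin (x i) + ∑ j, logTwoCosh (∑ i, J i j * spin (x i) + h2 j)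
      = K + f x) (x : Fin n → Bool) :
    (∑ y, rbmWeight n m J h1 h2 x y) / rbmZ n m J h1 h2
      = Real.exp (f x) / ∑ x', Real.exp (f x') := by
  have hw : ∀ x, ∑ y, rbmWeight n m J h1 h2 x y = Real.exp K * Real.exp (f x) := fun x => by
    rw [sum_rbmWeight_eq_exp, hf, Real.exp_add]
  rw [rbmZ]
  simp_rw [hw, ← mul_sum]
  exact mul_div_mul_left _ _ (Real.exp_ne_zero K)

lemma exists_rbm_of_units {ι : Type*} (U : Finset ι) (w : ι → Fin n → ℝ) (bias : ι → ℝ)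
    {f : (Fin n → Bool) → ℝ} {K : ℝ}
    (hf : ∀ x, ∑ u ∈ U, logTwoCosh (∑ i, w u i * spin (x i) + bias u) = K + f x) :
    ∃ (J : Fin n → Fin #U → ℝ) (h2 : Fin #U → ℝ),
      (∀ x, (∑ y, rbmWeight n #U J 0 h2 x y) / rbmZ n #U J 0 h2
        = Real.exp (f x) / ∑ x', Real.exp (f x')) ∧
      (∀ j, ∃ u ∈ U, ∀ i, J i j = w u i) ∧
      (∀ i, twoHopNbhd n #U J i = ({j | j ≠ i ∧ ∃ u ∈ U, w u i ≠ 0 ∧ w u j ≠ 0} : Finset _)) := by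
  set e : Fin #U ≃ U := U.equivFin.symm
  refine ⟨fun i j => w (e j) i, fun j => bias (e j), rbm_marginal_eq (K := K) fun x => ?_,
    fun j => ⟨e j, (e j).2, fun i => rfl⟩, fun i => ?_⟩
  · simp only [Pi.zero_apply, zero_mul, sum_const_zero, zero_add]
    rw [e.sum_comp (fun u => logTwoCosh (∑ i, w u i * spin (x i) + bias u)),
      sum_coe_sort U (fun u => logTwoCosh (∑ i, w u i * spin (x i) + bias u)), hf]
  · ext j
    simp only [twoHopNbhd, mem_filter, mem_univ, true_and]
    refine and_congr_right fun _ => ⟨fun ⟨k, hk⟩ => ⟨e k, (e k).2, hk⟩,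
      fun ⟨u, hu, hwu⟩ => ⟨e.symm ⟨u, hu⟩, by simpa using hwu⟩⟩

end RBM

section Gadgets

variable {α : Type*} [DecidableEq α]

def gadgetWeight (t : Finset α → ℝ) (u : Σ _ : Finset α, Finset α) (i : α) : ℝ :=
  if i ∈ u.1 then t u.1 * (if i ∈ u.2 then -1 else 1) else 0

lemma gadgetWeight_ne_zero_iff {t : Finset α → ℝ} {u : Σ _ : Finset α, Finset α}
    (ht : t u.1 ≠ 0) {i : α} : gadgetWeight t u i ≠ 0 ↔ i ∈ u.1 := by
  unfold gadgetWeight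
  split_ifs <;> simp_all

lemma sum_gadgetWeight_mul_spin [Fintype α] (t : Finset α → ℝ) (u : Σ _ : Finset α, Finset α)
    (x : α → Bool) : ∑ i, gadgetWeight t u i * spin (x i)
      = t u.1 * ∑ i ∈ u.1, (if i ∈ u.2 then -1 else 1) * spin (x i) := by
  simp only [gadgetWeight, ite_mul, zero_mul, sum_ite_mem, univ_inter, mul_sum, mul_assoc]

end Gadgets

section MRF

variable {n : ℕ}

def mrfSupport (c : Finset (Fin n) → ℝ) : Finset (Finset (Fin n)) := {S | c S ≠ 0}

@[simp]
lemma mem_mrfSupport {c : Finset (Fin n) → ℝ} {S : Finset (Fin n)} :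
    S ∈ mrfSupport c ↔ c S ≠ 0 := by
  simp [mrfSupport]

lemma nonempty_of_mem_mrfSupport {c : Finset (Fin n) → ℝ} (hc0 : c ∅ = 0)
    {S : Finset (Fin n)} (hS : S ∈ mrfSupport c) : S.Nonempty :=
  nonempty_iff_ne_empty.2 fun h => mem_mrfSupport.1 hS (h ▸ hc0)

lemma card_filter_mem_mrfSupport_le (c : Finset (Fin n) → ℝ) (i : Fin n) :
    #{S ∈ mrfSupport c | i ∈ S} ≤ 2 ^ (#(mrfNbhd n c i) + 1) := by
  have hsub : {S ∈ mrfSupport c | i ∈ S} ⊆ (insert i (mrfNbhd n c i)).powerset := by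
    intro S hS
    rw [mem_filter, mem_mrfSupport] at hS
    refine mem_powerset.2 fun j hj => ?_
    by_cases hji : j = i
    · exact hji ▸ mem_insert_self _ _
    · exact mem_insert_of_mem (by simp [mrfNbhd, hji]; exact ⟨S, hS.1, hS.2, hj⟩)
  calc #{S ∈ mrfSupport c | i ∈ S} ≤ 2 ^ #(insert i (mrfNbhd n c i)) :=
        (card_le_card hsub).trans_eq (card_powerset _)
    _ ≤ 2 ^ (#(mrfNbhd n c i) + 1) := Nat.pow_le_pow_right two_pos (card_insert_le _ _)

lemma card_mrfSupport_le {c : Finset (Fin n) → ℝ} (hc0 : c ∅ = 0) {d : ℕ}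
    (hd : ∀ i, #(mrfNbhd n c i) ≤ d) : #(mrfSupport c) ≤ n * 2 ^ (d + 1) := by
  calc #(mrfSupport c) = ∑ S ∈ mrfSupport c, 1 := card_eq_sum_ones _
    _ ≤ ∑ S ∈ mrfSupport c, #S :=
        sum_le_sum fun S hS => (nonempty_of_mem_mrfSupport hc0 hS).card_pos
    _ ≤ Fintype.card (Fin n) * 2 ^ (d + 1) := sum_card_le fun i =>
        (card_filter_mem_mrfSupport_le c i).trans
          (Nat.pow_le_pow_right two_pos (Nat.add_le_add_right (hd i) 1))
    _ = n * 2 ^ (d + 1) := by rw [Fintype.card_fin]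

def gadgetUnits (c : Finset (Fin n) → ℝ) (s : Finset (Fin n) → ℝ) :
    Finset (Σ _ : Finset (Fin n), Finset (Fin n)) :=
  (mrfSupport c).sigma fun S => {A ∈ S.powerset | (-1) ^ #A = s S}

lemma card_gadgetUnits_le {c : Finset (Fin n) → ℝ} (hc0 : c ∅ = 0) {r d : ℕ}
    (hr : ∀ S, c S ≠ 0 → #S ≤ r) (hd : ∀ i, #(mrfNbhd n c i) ≤ d) (s : Finset (Fin n) → ℝ) :
    #(gadgetUnits c s) ≤ 2 ^ (r + d + 1) * n :=
  calc #(gadgetUnits c s) = ∑ S ∈ mrfSupport c, #{A ∈ S.powerset | (-1) ^ #A = s S} :=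
        card_sigma _ _
    _ ≤ ∑ S ∈ mrfSupport c, 2 ^ r := sum_le_sum fun S hS =>
        ((card_filter_le _ _).trans_eq (card_powerset S)).trans
          (Nat.pow_le_pow_right two_pos (hr S (mem_mrfSupport.1 hS)))
    _ = #(mrfSupport c) * 2 ^ r := by rw [sum_const, smul_eq_mul]
    _ ≤ n * 2 ^ (d + 1) * 2 ^ r := Nat.mul_le_mul_right _ (card_mrfSupport_le hc0 hd)
    _ = 2 ^ (r + d + 1) * n := by ring

lemma exists_mk_mem_gadgetUnits {c : Finset (Fin n) → ℝ} (hc0 : c ∅ = 0)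
    {s : Finset (Fin n) → ℝ} {S : Finset (Fin n)} (hs : s S = 1 ∨ s S = -1)
    (hS : S ∈ mrfSupport c) :
    ∃ A, (⟨S, A⟩ : Σ _ : Finset (Fin n), Finset (Fin n)) ∈ gadgetUnits c s := by
  obtain ⟨i, hi⟩ := nonempty_of_mem_mrfSupport hc0 hS
  rcases hs with h | h
  · exact ⟨∅, by simp [gadgetUnits, hS, h]⟩
  · exact ⟨{i}, by simp [gadgetUnits, hS, h, hi]⟩

lemma sum_gadgetUnits_logTwoCosh {c : Finset (Fin n) → ℝ} {t b s K : Finset (Fin n) → ℝ}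
    (hK : ∀ S ∈ mrfSupport c, ∀ x : Fin n → Bool,
      ∑ A ∈ S.powerset with (-1) ^ #A = s S,
          logTwoCosh (t S * ∑ i ∈ S, (if i ∈ A then -1 else 1) * spin (x i) + b S)
        = K S + c S * ∏ i ∈ S, spin (x i)) (x : Fin n → Bool) :
    ∑ u ∈ gadgetUnits c s, logTwoCosh (∑ i, gadgetWeight t u i * spin (x i) + b u.1)
      = ∑ S ∈ mrfSupport c, K S + mrfPotential n c x := by
  simp only [gadgetUnits, sum_sigma, sum_gadgetWeight_mul_spin]
  refine (sum_congr rfl fun S hS => hK S hS x).trans ?_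
  rw [sum_add_distrib, mrfPotential, mrfSupport]
  exact congrArg _ (sum_filter_of_ne fun S _ => left_ne_zero_of_mul)

lemma filter_gadgetWeight_eq_mrfNbhd {c : Finset (Fin n) → ℝ} (hc0 : c ∅ = 0)
    {t s : Finset (Fin n) → ℝ} (ht : ∀ S ∈ mrfSupport c, t S ≠ 0)
    (hs : ∀ S ∈ mrfSupport c, s S = 1 ∨ s S = -1) (i : Fin n) :
    ({j | j ≠ i ∧ ∃ u ∈ gadgetUnits c s, gadgetWeight t u i ≠ 0 ∧ gadgetWeight t u j ≠ 0}
      : Finset (Fin n)) = mrfNbhd n c i := by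
  ext j
  simp only [mrfNbhd, mem_filter, mem_univ, true_and]
  refine and_congr_right fun _ => ⟨fun ⟨u, hu, hi, hj⟩ => ?_, fun ⟨S, hcS, hi, hj⟩ => ?_⟩
  · have hS := (mem_sigma.1 hu).1
    rw [gadgetWeight_ne_zero_iff (ht _ hS)] at hi hj
    exact ⟨u.1, mem_mrfSupport.1 hS, hi, hj⟩
  · have hS := mem_mrfSupport.2 hcS
    obtain ⟨A, hA⟩ := exists_mk_mem_gadgetUnits hc0 (hs S hS) hS
    exact ⟨⟨S, A⟩, hA, (gadgetWeight_ne_zero_iff (ht S hS)).2 hi,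
      (gadgetWeight_ne_zero_iff (ht S hS)).2 hj⟩

end MRF

theorem mrf_as_rbm_general (r d : ℕ) (M : ℝ) :
    ∃ C : ℕ, ∀ (n : ℕ) (c : Finset (Fin n) → ℝ),
      c ∅ = 0 →
      (∀ S : Finset (Fin n), c S ≠ 0 → S.card ≤ r) →
      (∀ S : Finset (Fin n), |c S| ≤ M) →
      (∀ i : Fin n, (mrfNbhd n c i).card ≤ d) →
      ∃ (m : ℕ) (J : Fin n → Fin m → ℝ) (h1 : Fin n → ℝ) (h2 : Fin m → ℝ),
        m ≤ C * n ∧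
        (∀ x : Fin n → Bool,
          (∑ y : Fin m → Bool, rbmWeight n m J h1 h2 x y) / rbmZ n m J h1 h2 =
            Real.exp (mrfPotential n c x) /
              ∑ x' : Fin n → Bool, Real.exp (mrfPotential n c x')) ∧
        (∀ j : Fin m, (univ.filter (fun i : Fin n => J i j ≠ 0)).card ≤ r) ∧
        (∀ i : Fin n, twoHopNbhd n m J i = mrfNbhd n c i) := by
  refine ⟨2 ^ (r + d + 1), fun n c hc0 hr _ hd => ?_⟩
  choose! t b s K ht hs hK using fun S (hS : S ∈ mrfSupport c) =>
    exists_gadget (nonempty_of_mem_mrfSupport hc0 hS) (mem_mrfSupport.1 hS)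
  obtain ⟨J, h2, hmarginal, hcolumn, htwoHop⟩ := exists_rbm_of_units (gadgetUnits c s)
    (gadgetWeight t) (fun u => b u.1) (sum_gadgetUnits_logTwoCosh hK)
  refine ⟨_, J, 0, h2, card_gadgetUnits_le hc0 hr hd s, hmarginal, fun j => ?_, fun i => ?_⟩
  · obtain ⟨u, hu, hJ⟩ := hcolumn j
    have hS := (mem_sigma.1 hu).1
    calc #{i | J i j ≠ 0} = #u.1 := by
          simp_rw [hJ, gadgetWeight_ne_zero_iff (ht _ hS), filter_univ_mem]
      _ ≤ r := hr _ (mem_mrfSupport.1 hS)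
  · rw [htwoHop, filter_gadgetWeight_eq_mrfNbhd hc0 ht hs]

/-- Every bounded-degree order-`r` MRF with bounded coefficients is the marginal
distribution of the observed variables of an RBM with `O(n)` hidden nodes, each of
degree at most `r`, whose two-hop neighborhoods coincide with the MRF neighborhoods. -/
theorem mrf_as_rbm (r d : ℕ) (hr : 0 < r) (hd : 0 < d) (M : ℝ) (hM : 0 < M) :
    ∃ C : ℕ, ∀ (n : ℕ) (c : Finset (Fin n) → ℝ),
      c ∅ = 0 →
      (∀ S : Finset (Fin n), c S ≠ 0 → S.card ≤ r) →
      (∀ S : Finset (Fin n), |c S| ≤ M) →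
      (∀ i : Fin n, (mrfNbhd n c i).card ≤ d) →
      ∃ (m : ℕ) (J : Fin n → Fin m → ℝ) (h1 : Fin n → ℝ) (h2 : Fin m → ℝ),
        m ≤ C * n ∧
        (∀ x : Fin n → Bool,
          (∑ y : Fin m → Bool, rbmWeight n m J h1 h2 x y) / rbmZ n m J h1 h2 =
            Real.exp (mrfPotential n c x) /
              ∑ x' : Fin n → Bool, Real.exp (mrfPotential n c x')) ∧
        (∀ j : Fin m, (univ.filter (fun i : Fin n => J i j ≠ 0)).card ≤ r) ∧
        (∀ i : Fin n, twoHopNbhd n m J i = mrfNbhd n c i) :=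
  mrf_as_rbm_general r d M
end
end
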